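/- Take a_n = 1/(100 n³) and N = 4. If f : [0,1) → ℂ is a bounded Lipschitz function, λ ∈ ℂ with |λ| = 1, f is not identically zero, and L f = λ f, then f is constant and λ = 1. In particular, 1 is the only eigenvalue of modulus 1 of L on Lipschitz functions and its eigenspace consists of the constant functions. -/

import Mathlib

open MeasureTheory Set Filter

noncomputable section

namespace Gouezel

/-- `b a n = 4 * ∑_{k=1}^n a_k` (left endpoints of the intervals `I_n`). -/
def b (a : ℕ → ℝ) (n : ℕ) : ℝ := 4 * ∑ k ∈ Finset.range n, a (k + 1)

/-- `b_∞ = 4 * ∑_{n=1}^∞ a_n`. -/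
def binf (a : ℕ → ℝ) : ℝ := 4 * ∑' n : ℕ, a (n + 1)

/-- The length `|J| = 1 - b_∞` of the interval `J = [b_∞, 1)`. -/
def lenJ (a : ℕ → ℝ) : ℝ := 1 - binf a

/-- `v_n'(x) = a_n (1 + 2 cos²(2π n⁴ x))`. -/
def vd (a : ℕ → ℝ) (n : ℕ) (x : ℝ) : ℝ :=
  a n * (1 + 2 * Real.cos (2 * Real.pi * (n : ℝ) ^ 4 * x) ^ 2)

/-- `w_n'(x) = a_n (1 + 2 sin²(2π n⁴ x))`. -/
def wd (a : ℕ → ℝ) (n : ℕ) (x : ℝ) : ℝ :=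
  a n * (1 + 2 * Real.sin (2 * Real.pi * (n : ℝ) ^ 4 * x) ^ 2)

/-- The inverse branch `v_n(x) = b_{n-1} + ∫_0^x v_n'(t) dt`. -/
def v (a : ℕ → ℝ) (n : ℕ) (x : ℝ) : ℝ := b a (n - 1) + ∫ t in (0:ℝ)..x, vd a n t

/-- The inverse branch `w_n(x) = b_{n-1} + 2 a_n + ∫_0^x w_n'(t) dt`. -/
def w (a : ℕ → ℝ) (n : ℕ) (x : ℝ) : ℝ :=
  b a (n - 1) + 2 * a n + ∫ t in (0:ℝ)..x, wd a n t

/-- The affine inverse branches `u_j(x) = b_∞ + (j-1)|J|/N + (|J|/N) x`, `1 ≤ j ≤ N`. -/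
def u (a : ℕ → ℝ) (N : ℕ) (j : ℕ) (x : ℝ) : ℝ :=
  binf a + ((j : ℝ) - 1) * (lenJ a / N) + (lenJ a / N) * x

/-- The transfer operator on complex-valued functions. -/
def L (a : ℕ → ℝ) (N : ℕ) (f : ℝ → ℂ) (x : ℝ) : ℂ :=
  (∑' n : ℕ, ((vd a (n + 1) x : ℂ) * f (v a (n + 1) x)
      + (wd a (n + 1) x : ℂ) * f (w a (n + 1) x)))
    + ((lenJ a / (N : ℝ) : ℝ) : ℂ) * ∑ j ∈ Finset.range N, f (u a N (j + 1) x)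

/-- The transfer operator on real-valued functions. -/
def LR (a : ℕ → ℝ) (N : ℕ) (f : ℝ → ℝ) (x : ℝ) : ℝ :=
  (∑' n : ℕ, (vd a (n + 1) x * f (v a (n + 1) x) + wd a (n + 1) x * f (w a (n + 1) x)))
    + (lenJ a / N) * ∑ j ∈ Finset.range N, f (u a N (j + 1) x)

/-- The part `L_n` of the transfer operator coming from the branches `v_n, w_n`. -/
def Ln (a : ℕ → ℝ) (n : ℕ) (f : ℝ → ℂ) (x : ℝ) : ℂ :=
  (vd a n x : ℂ) * f (v a n x) + (wd a n x : ℂ) * f (w a n x)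

/-- Sup norm of `f` on `[0,1)`. -/
def supNorm (f : ℝ → ℂ) : ℝ := ⨆ x : Ico (0:ℝ) 1, ‖f x.1‖

/-- Best Lipschitz constant of `f` on `[0,1)` (the term at `x = y` is `0/0 = 0`). -/
def lipConst (f : ℝ → ℂ) : ℝ :=
  ⨆ p : Ico (0:ℝ) 1 × Ico (0:ℝ) 1, ‖f p.1.1 - f p.2.1‖ / |p.1.1 - p.2.1|

/-- Lipschitz norm `‖f‖_Lip = sup|f| + Lip(f)` on `[0,1)`. -/
def lipNorm (f : ℝ → ℂ) : ℝ := supNorm f + lipConst f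

/-- `f` is bounded and Lipschitz on `[0,1)`. -/
def BddLip (f : ℝ → ℂ) : Prop :=
  ∃ K : ℝ, (∀ x ∈ Ico (0:ℝ) 1, ‖f x‖ ≤ K) ∧
    ∀ x ∈ Ico (0:ℝ) 1, ∀ y ∈ Ico (0:ℝ) 1, ‖f x - f y‖ ≤ K * |x - y|

/-- The specific choice `a_n = 1/(100 n³)`. -/
def aa (n : ℕ) : ℝ := 1 / (100 * (n : ℝ) ^ 3)

/-- Standing hypotheses on the sequence `(a_n)`: positivity and `∑ a_n < 1/4`. -/
def StdHyp (a : ℕ → ℝ) : Prop :=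
  (∀ n : ℕ, 1 ≤ n → 0 < a n) ∧ Summable (fun n : ℕ => a (n + 1)) ∧
    (∑' n : ℕ, a (n + 1)) < 1 / 4

/-- `T : [0,1) → [0,1)` has the maps `v_n, w_n` (`n ≥ 1`) and `u_j` (`1 ≤ j ≤ N`)
as inverse branches. -/
def InverseBranches (a : ℕ → ℝ) (N : ℕ) (T : ℝ → ℝ) : Prop :=
  MapsTo T (Ico (0:ℝ) 1) (Ico (0:ℝ) 1) ∧
    ∀ x ∈ Ico (0:ℝ) 1,
      (∀ n : ℕ, 1 ≤ n → T (v a n x) = x ∧ T (w a n x) = x) ∧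
      (∀ j : ℕ, 1 ≤ j → j ≤ N → T (u a N j x) = x)

open Real
open scoped NNReal Topology

/-! `L F x = ∑ᵢ pᵢ(x) F(φᵢ x)` is an average over the inverse branches `φᵢ` with positive
weights `pᵢ` summing to `1`. Extend `f` continuously to `[0,1]`. At a point `x` where `|F|` is
maximal, `λ F(x)` is an average of values of modulus at most `|λ F(x)|`, so by the equality
case of the triangle inequality `F(φᵢ x) = λ F(x)` for every branch. The branches are uniform
contractions whose images cover `[0,1]`, so a nonempty closed subset of `[0,1]` invariant under
all of them is `[0,1]`. Applied to the set where `|F|` is maximal, this makes `|F|` constant;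
then the fixed point of `u₁` forces `λ = 1`, and applied to a level set it makes `F` constant. -/

theorem eq_of_hasSum_smul_of_norm_le {ι E : Type*} [NormedAddCommGroup E] [InnerProductSpace ℝ E]
    {p : ι → ℝ} {z : ι → E} {c : E} (hp : ∀ i, 0 ≤ p i) (hp1 : HasSum p 1)
    (hz : ∀ i, ‖z i‖ ≤ ‖c‖) (hc : HasSum (fun i => p i • z i) c) {i : ι} (hi : 0 < p i) :
    z i = c := by
  have hinner : HasSum (fun j => p j * inner ℝ c (z j)) (‖c‖ ^ 2) := by
    simpa [inner_smul_right, real_inner_self_eq_norm_sq] using hc.mapL (innerSL ℝ c)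
  have hdefect : HasSum (fun j => p j * (‖c‖ ^ 2 - inner ℝ c (z j))) 0 := by
    have := (hp1.mul_right (‖c‖ ^ 2)).sub hinner
    rw [one_mul, sub_self] at this
    simpa only [mul_sub] using this
  have hnonneg : ∀ j, 0 ≤ p j * (‖c‖ ^ 2 - inner ℝ c (z j)) := fun j =>
    mul_nonneg (hp j) (by nlinarith [real_inner_le_norm c (z j), hz j, norm_nonneg c])
  have hci : inner ℝ c (z i) = ‖c‖ ^ 2 := by
    have := congrFun ((hasSum_zero_iff_of_nonneg hnonneg).1 hdefect) i
    rcases mul_eq_zero.1 this with h | h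
    · exact absurd h hi.ne'
    · linarith
  have : ‖z i - c‖ ^ 2 ≤ 0 := by
    rw [norm_sub_sq_real, real_inner_comm, hci]; nlinarith [hz i, norm_nonneg (z i)]
  exact sub_eq_zero.1 (norm_eq_zero.1 (by nlinarith [norm_nonneg (z i - c)]))

theorem subset_of_isClosed_of_forall_mapsTo {X ι : Type*} [PseudoMetricSpace X]
    {φ : ι → X → X} {K S : Set X} {r : ℝ≥0} (hr : r < 1) (hφ : ∀ i, LipschitzOnWith r (φ i) K)
    (hcover : K ⊆ ⋃ i, φ i '' K) (hK : Bornology.IsBounded K) (hS : IsClosed S) (hSK : S ⊆ K)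
    (hSne : S.Nonempty) (hSφ : ∀ i, MapsTo (φ i) S S) : K ⊆ S := by
  have approx : ∀ k : ℕ, ∀ y ∈ K, ∃ s ∈ S, dist y s ≤ r ^ k * Metric.diam K := by
    intro k
    induction k with
    | zero =>
      intro y hy
      obtain ⟨s, hs⟩ := hSne
      exact ⟨s, hs, by simpa using Metric.dist_le_diam_of_mem hK hy (hSK hs)⟩
    | succ k ih =>
      intro y hy
      obtain ⟨i, z, hz, rfl⟩ := mem_iUnion.1 (hcover hy)
      obtain ⟨s, hs, hzs⟩ := ih z hz
      refine ⟨φ i s, hSφ i hs, ?_⟩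
      calc dist (φ i z) (φ i s) ≤ r * dist z s := (hφ i).dist_le_mul z hz s (hSK hs)
        _ ≤ r * (r ^ k * Metric.diam K) := by gcongr
        _ = r ^ (k + 1) * Metric.diam K := by ring
  intro y hy
  rw [← hS.closure_eq, Metric.mem_closure_iff]
  intro ε hε
  have hlim : Tendsto (fun k => (r : ℝ) ^ k * Metric.diam K) atTop (𝓝 0) := by
    simpa using (tendsto_pow_atTop_nhds_zero_of_lt_one r.2 hr).mul_const (Metric.diam K)
  obtain ⟨k, hk⟩ := (hlim.eventually (gt_mem_nhds hε)).exists
  obtain ⟨s, hs, hys⟩ := approx k y hy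
  exact ⟨s, hs, hys.trans_lt hk⟩

theorem exists_fin_mem_Icc {N : ℕ} (hN : N ≠ 0) {t : ℝ} (ht : t ∈ Icc (0 : ℝ) N) :
    ∃ j : Fin N, t ∈ Icc (j : ℝ) (j + 1) := by
  by_cases htN : t < N
  · exact ⟨⟨⌊t⌋₊, (Nat.floor_lt ht.1).2 htN⟩, Nat.floor_le ht.1, (Nat.lt_floor_add_one t).le⟩
  · refine ⟨⟨N - 1, by omega⟩, ?_, ?_⟩ <;>
      simp only [Nat.cast_sub (Nat.one_le_iff_ne_zero.2 hN), Nat.cast_one] <;> linarith [ht.2]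

theorem integral_cos_two_pi_nat_mul {k : ℕ} (hk : k ≠ 0) :
    ∫ t in (0 : ℝ)..1, cos (2 * π * k * t) = 0 := by
  have hc : 2 * π * k ≠ 0 := by positivity
  rw [intervalIntegral.integral_comp_mul_left (fun t => cos t) hc, integral_cos,
    show 2 * π * k * 1 = ((2 * k : ℕ) : ℝ) * π by push_cast; ring, sin_nat_mul_pi]
  simp

namespace StdHyp

variable {a : ℕ → ℝ}

theorem pos (ha : StdHyp a) (n : ℕ) : 0 < a (n + 1) := ha.1 (n + 1) n.succ_pos

theorem hasSum_binf (ha : StdHyp a) : HasSum (fun n => 4 * a (n + 1)) (binf a) :=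
  ha.2.1.hasSum.mul_left 4

theorem lt_quarter (ha : StdHyp a) (n : ℕ) : a (n + 1) < 1 / 4 :=
  (ha.2.1.le_tsum n fun k _ => (ha.pos k).le).trans_lt ha.2.2

theorem binf_pos (ha : StdHyp a) : 0 < binf a :=
  mul_pos four_pos (ha.2.1.tsum_pos (fun n => (ha.pos n).le) 0 (ha.pos 0))

theorem lenJ_pos (ha : StdHyp a) : 0 < lenJ a := by
  have := ha.2.2; unfold lenJ binf; linarith

theorem lenJ_lt_one (ha : StdHyp a) : lenJ a < 1 := by
  have := ha.binf_pos; unfold lenJ; linarith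

theorem monotone_b (ha : StdHyp a) : Monotone (b a) :=
  monotone_nat_of_le_succ fun n => by
    simp only [b, Finset.sum_range_succ]; linarith [ha.pos n]

theorem b_nonneg (ha : StdHyp a) (n : ℕ) : 0 ≤ b a n := by
  simpa [b] using ha.monotone_b n.zero_le

theorem tendsto_b (ha : StdHyp a) : Tendsto (b a) atTop (𝓝 (binf a)) :=
  ha.2.1.hasSum.tendsto_sum_nat.const_mul 4

theorem b_le_binf (ha : StdHyp a) (n : ℕ) : b a n ≤ binf a :=
  ha.monotone_b.ge_of_tendsto ha.tendsto_b n

end StdHyp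

theorem b_succ (a : ℕ → ℝ) (n : ℕ) : b a (n + 1) = b a n + 4 * a (n + 1) := by
  simp only [b, Finset.sum_range_succ]; ring

theorem stdHyp_aa : StdHyp aa := by
  have hzeta : HasSum (fun n : ℕ => 1 / ((n + 1 : ℕ) : ℝ) ^ 2) (π ^ 2 / 6) := by
    simpa using (hasSum_nat_add_iff' 1).2 hasSum_zeta_two
  have hle : ∀ n : ℕ, aa (n + 1) ≤ 1 / 100 * (1 / ((n + 1 : ℕ) : ℝ) ^ 2) := fun n => by
    have : (1 : ℝ) ≤ (n + 1 : ℕ) := by exact_mod_cast n.succ_pos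
    rw [aa, div_mul_div_comm, one_mul]
    gcongr
    nlinarith
  have hpos : ∀ n, 1 ≤ n → 0 < aa n := fun n hn => by
    have : (0 : ℝ) < n := by exact_mod_cast hn
    unfold aa; positivity
  have hsum : Summable fun n => aa (n + 1) :=
    (hzeta.summable.mul_left _).of_nonneg_of_le (fun n => (hpos _ n.succ_pos).le) hle
  refine ⟨hpos, hsum, ?_⟩
  calc ∑' n, aa (n + 1) ≤ ∑' n : ℕ, 1 / 100 * (1 / ((n + 1 : ℕ) : ℝ) ^ 2) :=
        hsum.tsum_le_tsum hle (hzeta.summable.mul_left _)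
    _ = 1 / 100 * (π ^ 2 / 6) := by rw [tsum_mul_left, hzeta.tsum_eq]
    _ < 1 / 4 := by nlinarith [pi_le_four, pi_pos]

section Branches

variable (a : ℕ → ℝ)

theorem continuous_vd (n : ℕ) : Continuous (vd a n) := by unfold vd; fun_prop

theorem vd_add_wd (n : ℕ) (x : ℝ) : vd a n x + wd a n x = 4 * a n := by
  unfold vd wd
  linear_combination 2 * a n * sin_sq_add_cos_sq (2 * π * (n : ℝ) ^ 4 * x)

theorem vd_eq_mul_two_add_cos (n : ℕ) (x : ℝ) :
    vd a n x = a n * (2 + cos (2 * π * ((2 * n ^ 4 : ℕ) : ℝ) * x)) := by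
  rw [vd, cos_sq]; push_cast; ring_nf

variable {a}

theorem le_vd {n : ℕ} (h : 0 ≤ a n) (x : ℝ) : a n ≤ vd a n x := by
  unfold vd; nlinarith [sq_nonneg (cos (2 * π * (n : ℝ) ^ 4 * x))]

theorem le_wd {n : ℕ} (h : 0 ≤ a n) (x : ℝ) : a n ≤ wd a n x := by
  unfold wd; nlinarith [sq_nonneg (sin (2 * π * (n : ℝ) ^ 4 * x))]

theorem vd_le {n : ℕ} (h : 0 ≤ a n) (x : ℝ) : vd a n x ≤ 3 * a n := by
  linarith [vd_add_wd a n x, le_wd h x]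

theorem wd_le {n : ℕ} (h : 0 ≤ a n) (x : ℝ) : wd a n x ≤ 3 * a n := by
  linarith [vd_add_wd a n x, le_vd h x]

variable (a)

theorem integral_vd {n : ℕ} (hn : n ≠ 0) : ∫ t in (0 : ℝ)..1, vd a n t = 2 * a n := by
  simp_rw [vd_eq_mul_two_add_cos, intervalIntegral.integral_const_mul]
  rw [intervalIntegral.integral_add intervalIntegrable_const
      ((by fun_prop : Continuous fun t => cos (2 * π * ((2 * n ^ 4 : ℕ) : ℝ) * t)).intervalIntegrable
        _ _),
    integral_cos_two_pi_nat_mul (by positivity)]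
  simp only [intervalIntegral.integral_const, sub_zero, smul_eq_mul, one_mul, add_zero]
  ring

theorem hasDerivAt_v (n : ℕ) (x : ℝ) : HasDerivAt (v a n) (vd a n x) x :=
  ((continuous_vd a n).integral_hasStrictDerivAt 0 x).hasDerivAt.const_add _

theorem hasDerivAt_w (n : ℕ) (x : ℝ) : HasDerivAt (w a n) (wd a n x) x := by
  have hwd : Continuous (wd a n) := by unfold wd; fun_prop
  exact (hwd.integral_hasStrictDerivAt 0 x).hasDerivAt.const_add _

theorem v_zero (n : ℕ) : v a (n + 1) 0 = b a n := by simp [v]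

theorem v_one (n : ℕ) : v a (n + 1) 1 = b a n + 2 * a (n + 1) := by
  simp [v, integral_vd a n.succ_ne_zero]

theorem w_zero (n : ℕ) : w a (n + 1) 0 = b a n + 2 * a (n + 1) := by simp [w]

theorem w_one (n : ℕ) : w a (n + 1) 1 = b a (n + 1) := by
  have hwd : ∫ t in (0 : ℝ)..1, wd a (n + 1) t = 2 * a (n + 1) := by
    simp_rw [← sub_eq_of_eq_add' (vd_add_wd a (n + 1) _).symm]
    rw [intervalIntegral.integral_sub intervalIntegrable_const
      ((continuous_vd a _).intervalIntegrable _ _), integral_vd a n.succ_ne_zero,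
      intervalIntegral.integral_const]
    simp only [sub_zero, smul_eq_mul, one_mul]
    ring
  rw [w, hwd, b_succ, add_tsub_cancel_right]
  ring

theorem u_succ_eq (N j : ℕ) (x : ℝ) : u a N (j + 1) x = binf a + lenJ a / N * (j + x) := by
  rw [u]; push_cast; ring

/-- The inverse branches: `inl (inl n)`, `inl (inr n)` and `inr j` stand for `v_{n+1}`,
`w_{n+1}` and `u_{j+1}`; `weight` is the derivative of the corresponding branch. -/
def branch (N : ℕ) : (ℕ ⊕ ℕ) ⊕ Fin N → ℝ → ℝ
  | .inl (.inl n) => v a (n + 1)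
  | .inl (.inr n) => w a (n + 1)
  | .inr j => u a N ((j : ℕ) + 1)

def weight (N : ℕ) : (ℕ ⊕ ℕ) ⊕ Fin N → ℝ → ℝ
  | .inl (.inl n) => vd a (n + 1)
  | .inl (.inr n) => wd a (n + 1)
  | .inr _ => fun _ => lenJ a / N

variable {a} {N : ℕ}

theorem weight_pos (ha : StdHyp a) (i : (ℕ ⊕ ℕ) ⊕ Fin N) (x : ℝ) : 0 < weight a N i x := by
  rcases i with (n | n) | j
  · exact (ha.pos n).trans_le (le_vd (ha.pos n).le x)
  · exact (ha.pos n).trans_le (le_wd (ha.pos n).le x)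
  · exact div_pos ha.lenJ_pos (Nat.cast_pos.2 j.pos)

theorem hasSum_weight (ha : StdHyp a) (hN : N ≠ 0) (x : ℝ) :
    HasSum (fun i => weight a N i x) 1 := by
  have hv : Summable fun n => vd a (n + 1) x := ha.hasSum_binf.summable.of_nonneg_of_le
    (fun n => (weight_pos ha (N := N) (.inl (.inl n)) x).le)
    (fun n => by linarith [vd_le (ha.pos n).le x, ha.pos n])
  have hw : Summable fun n => wd a (n + 1) x := ha.hasSum_binf.summable.of_nonneg_of_le
    (fun n => (weight_pos ha (N := N) (.inl (.inr n)) x).le)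
    (fun n => by linarith [wd_le (ha.pos n).le x, ha.pos n])
  have h := HasSum.sum (f := fun i => weight a N i x)
    (HasSum.sum (f := fun i => weight a N (.inl i) x) hv.hasSum hw.hasSum)
    (hasSum_fintype fun _ : Fin N => lenJ a / N)
  convert h using 1
  rw [← hv.tsum_add hw, funext fun n => vd_add_wd a (n + 1) x, ha.hasSum_binf.tsum_eq]
  simp [mul_div_cancel₀ _ (Nat.cast_ne_zero.2 hN : (N : ℝ) ≠ 0), lenJ]

theorem strictMono_branch (ha : StdHyp a) (i : (ℕ ⊕ ℕ) ⊕ Fin N) : StrictMono (branch a N i) := by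
  rcases i with (n | n) | j
  · exact strictMono_of_hasDerivAt_pos (hasDerivAt_v a _) (weight_pos ha (N := N) (.inl (.inl n)))
  · exact strictMono_of_hasDerivAt_pos (hasDerivAt_w a _) (weight_pos ha (N := N) (.inl (.inr n)))
  · intro x y hxy
    simp only [branch, u_succ_eq]
    gcongr
    exact div_pos ha.lenJ_pos (Nat.cast_pos.2 j.pos)

theorem branch_zero_nonneg (ha : StdHyp a) (i : (ℕ ⊕ ℕ) ⊕ Fin N) : 0 ≤ branch a N i 0 := by
  rcases i with (n | n) | j
  · simpa [branch, v_zero] using ha.b_nonneg n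
  · simp only [branch, w_zero]; linarith [ha.b_nonneg n, ha.pos n]
  · simp only [branch, u_succ_eq]
    have := div_pos ha.lenJ_pos (Nat.cast_pos.2 j.pos)
    have := ha.binf_pos
    positivity

theorem branch_one_le_one (ha : StdHyp a) (i : (ℕ ⊕ ℕ) ⊕ Fin N) : branch a N i 1 ≤ 1 := by
  have hb := ha.b_le_binf
  have hbinf : binf a < 1 := by have := ha.lenJ_pos; unfold lenJ at this; linarith
  rcases i with (n | n) | j
  · simp only [branch, v_one]; linarith [b_succ a n, hb (n + 1), ha.pos n]
  · simp only [branch, w_one]; linarith [hb (n + 1)]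
  · simp only [branch, u_succ_eq]
    have hN : (0 : ℝ) < N := Nat.cast_pos.2 j.pos
    have hj : (j : ℝ) + 1 ≤ N := by exact_mod_cast j.isLt
    calc binf a + lenJ a / N * (j + 1) ≤ binf a + lenJ a / N * N := by
          gcongr; exact (div_pos ha.lenJ_pos hN).le
      _ = 1 := by rw [div_mul_cancel₀ _ hN.ne', lenJ]; ring

theorem mapsTo_branch_Icc (ha : StdHyp a) (i : (ℕ ⊕ ℕ) ⊕ Fin N) :
    MapsTo (branch a N i) (Icc 0 1) (Icc 0 1) := fun _ hx =>
  ⟨(branch_zero_nonneg ha i).trans ((strictMono_branch ha i).monotone hx.1),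
    ((strictMono_branch ha i).monotone hx.2).trans (branch_one_le_one ha i)⟩

theorem mapsTo_branch_Ico (ha : StdHyp a) (i : (ℕ ⊕ ℕ) ⊕ Fin N) :
    MapsTo (branch a N i) (Ico 0 1) (Ico 0 1) := fun _ hx =>
  ⟨(branch_zero_nonneg ha i).trans ((strictMono_branch ha i).monotone hx.1),
    ((strictMono_branch ha i) hx.2).trans_le (branch_one_le_one ha i)⟩

end Branches

section Operator

variable {a : ℕ → ℝ} {N : ℕ}

theorem continuous_branch (i : (ℕ ⊕ ℕ) ⊕ Fin N) : Continuous (branch a N i) := by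
  rcases i with (n | n) | j
  · exact continuous_iff_continuousAt.2 fun x => (hasDerivAt_v a _ x).continuousAt
  · exact continuous_iff_continuousAt.2 fun x => (hasDerivAt_w a _ x).continuousAt
  · simp only [branch]; unfold u; fun_prop

theorem exists_lipschitzWith_branch (ha : StdHyp a) (hN : N ≠ 0) :
    ∃ r : ℝ≥0, r < 1 ∧ ∀ i : (ℕ ⊕ ℕ) ⊕ Fin N, LipschitzWith r (branch a N i) := by
  -- `v_n', w_n' ≤ 3 a_n < 3/4` since `a_n < 1/4`, and `u_j' = |J|/N < 1`.
  refine ⟨max (3 / 4) (lenJ a).toNNReal, max_lt (by norm_num)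
    (Real.toNNReal_lt_one.2 ha.lenJ_lt_one), fun i => ?_⟩
  have hr : (3 / 4 : ℝ) ≤ max (3 / 4) (lenJ a).toNNReal := by
    exact_mod_cast le_max_left (3 / 4 : ℝ≥0) _
  have hderiv {f f' : ℝ → ℝ} (hf : ∀ x, HasDerivAt f (f' x) x) (hf' : ∀ x, |f' x| ≤ 3 / 4) :
      LipschitzWith (max (3 / 4) (lenJ a).toNNReal) f :=
    lipschitzWith_of_nnnorm_deriv_le (fun x => (hf x).differentiableAt) fun x => by
      rw [(hf x).deriv, ← NNReal.coe_le_coe, coe_nnnorm, Real.norm_eq_abs]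
      exact (hf' x).trans hr
  rcases i with (n | n) | j
  · refine hderiv (hasDerivAt_v a _) fun x => ?_
    rw [abs_le]
    constructor <;> linarith [le_vd (ha.pos n).le x, vd_le (ha.pos n).le x, ha.lt_quarter n]
  · refine hderiv (hasDerivAt_w a _) fun x => ?_
    rw [abs_le]
    constructor <;> linarith [le_wd (ha.pos n).le x, wd_le (ha.pos n).le x, ha.lt_quarter n]
  · refine LipschitzWith.of_dist_le_mul fun x y => ?_
    have hN1 : (1 : ℝ) ≤ N := by exact_mod_cast Nat.one_le_iff_ne_zero.2 hN
    simp only [branch, u_succ_eq, Real.dist_eq, NNReal.coe_max, Real.coe_toNNReal _ ha.lenJ_pos.le]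
    rw [show binf a + lenJ a / N * (j + x) - (binf a + lenJ a / N * (j + y))
      = lenJ a / N * (x - y) by ring, abs_mul, abs_of_pos (div_pos ha.lenJ_pos (by linarith))]
    gcongr
    exact (div_le_self ha.lenJ_pos.le hN1).trans (le_max_right _ _)

theorem Icc_subset_iUnion_Icc_branch (ha : StdHyp a) (hN : N ≠ 0) :
    Icc 0 1 ⊆ ⋃ i : (ℕ ⊕ ℕ) ⊕ Fin N, Icc (branch a N i 0) (branch a N i 1) := by
  classical
  intro y hy
  simp only [mem_iUnion]
  rcases lt_or_ge y (binf a) with hlt | hge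
  · have hex : ∃ n, y < b a n := (ha.tendsto_b.eventually (eventually_gt_nhds hlt)).exists
    obtain ⟨m, hm⟩ : ∃ m, Nat.find hex = m + 1 :=
      Nat.exists_eq_add_one.2 (Nat.pos_of_ne_zero fun h0 => by
        have := Nat.find_spec hex
        rw [h0, b, Finset.sum_range_zero, mul_zero] at this
        linarith [hy.1])
    have hlow : b a m ≤ y := not_lt.1 (Nat.find_min hex (by omega))
    have hup : y < b a (m + 1) := hm ▸ Nat.find_spec hex
    rcases le_or_gt y (b a m + 2 * a (m + 1)) with hv | hw
    · exact ⟨.inl (.inl m), by simpa [branch, v_zero, v_one] using ⟨hlow, hv⟩⟩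
    · exact ⟨.inl (.inr m), by simpa [branch, w_zero, w_one] using ⟨hw.le, hup.le⟩⟩
  · have hl : 0 < lenJ a / N := div_pos ha.lenJ_pos (Nat.cast_pos.2 (Nat.pos_of_ne_zero hN))
    have ht : (y - binf a) / (lenJ a / N) ∈ Icc (0 : ℝ) N := by
      refine ⟨div_nonneg (by linarith) hl.le, (div_le_iff₀ hl).2 ?_⟩
      rw [mul_div_cancel₀ _ (Nat.cast_ne_zero.2 hN : (N : ℝ) ≠ 0), lenJ]
      linarith [hy.2]
    obtain ⟨j, hj₁, hj₂⟩ := exists_fin_mem_Icc hN ht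
    refine ⟨.inr j, ?_, ?_⟩ <;> simp only [branch, u_succ_eq]
    · have := (le_div_iff₀ hl).1 hj₁; linarith
    · have := (div_le_iff₀ hl).1 hj₂; linarith

theorem Icc_subset_iUnion_image_branch (ha : StdHyp a) (hN : N ≠ 0) :
    Icc 0 1 ⊆ ⋃ i : (ℕ ⊕ ℕ) ⊕ Fin N, branch a N i '' Icc 0 1 :=
  (Icc_subset_iUnion_Icc_branch ha hN).trans <| iUnion_mono fun i =>
    intermediate_value_Icc zero_le_one (continuous_branch i).continuousOn

theorem Icc_subset_of_mapsTo_branch (ha : StdHyp a) (hN : N ≠ 0) {S : Set ℝ} (hS : IsClosed S)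
    (hSI : S ⊆ Icc 0 1) (hSne : S.Nonempty) (hSb : ∀ i, MapsTo (branch a N i) S S) :
    Icc 0 1 ⊆ S := by
  obtain ⟨r, hr, hlip⟩ := exists_lipschitzWith_branch ha hN
  exact subset_of_isClosed_of_forall_mapsTo hr (fun i => (hlip i).lipschitzOnWith)
    (Icc_subset_iUnion_image_branch ha hN) (Metric.isBounded_Icc 0 1) hS hSI hSne hSb

end Operator

section Eigenfunctions

variable {a : ℕ → ℝ} {N : ℕ}

theorem hasSum_L (ha : StdHyp a) (hN : N ≠ 0) {F : ℝ → ℂ} {C : ℝ} (hF : ∀ y, ‖F y‖ ≤ C)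
    (x : ℝ) : HasSum (fun i => weight a N i x • F (branch a N i x)) (L a N F x) := by
  have hs : Summable fun i => weight a N i x • F (branch a N i x) :=
    ((hasSum_weight ha hN x).summable.mul_right C).of_norm_bounded fun i => by
      rw [norm_smul, Real.norm_of_nonneg (weight_pos ha i x).le]
      exact mul_le_mul_of_nonneg_left (hF _) (weight_pos ha i x).le
  have hv := hs.comp_injective (Sum.inl_injective.comp Sum.inl_injective)
  have hw := hs.comp_injective (Sum.inl_injective.comp Sum.inr_injective)
  have h := HasSum.sum (f := fun i => weight a N i x • F (branch a N i x))
    (HasSum.sum (f := fun i => weight a N (.inl i) x • F (branch a N (.inl i) x))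
      hv.hasSum hw.hasSum) (hasSum_fintype _)
  convert h using 1
  simp only [L, Complex.real_smul, Finset.mul_sum]
  congr 1
  · exact hv.tsum_add hw
  · exact (Fin.sum_univ_eq_sum_range (fun j => ((lenJ a / N : ℝ) : ℂ) * F (u a N (j + 1) x)) N).symm

theorem continuous_L (ha : StdHyp a) {F : ℝ → ℂ} (hFc : Continuous F) {C : ℝ}
    (hF : ∀ y, ‖F y‖ ≤ C) : Continuous (L a N F) := by
  have hterm (n : ℕ) (x : ℝ) : ‖(vd a (n + 1) x : ℂ) * F (v a (n + 1) x)
      + (wd a (n + 1) x : ℂ) * F (w a (n + 1) x)‖ ≤ 4 * a (n + 1) * C := by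
    have hv := (weight_pos ha (N := N) (.inl (.inl n)) x).le
    have hw := (weight_pos ha (N := N) (.inl (.inr n)) x).le
    calc _ ≤ vd a (n + 1) x * C + wd a (n + 1) x * C := by
          refine (norm_add_le _ _).trans (add_le_add ?_ ?_) <;>
            rw [norm_mul, Complex.norm_real, Real.norm_of_nonneg (by assumption)] <;>
            gcongr <;> apply hF
      _ = 4 * a (n + 1) * C := by rw [← add_mul, vd_add_wd]
  refine (continuous_tsum (fun n => ?_) (ha.hasSum_binf.summable.mul_right C) hterm).add
    (continuous_const.mul (continuous_finsetSum _ fun j _ => hFc.comp ?_))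
  · have hv := continuous_branch (a := a) (N := N) (.inl (.inl n))
    have hw := continuous_branch (a := a) (N := N) (.inl (.inr n))
    have hwd : Continuous (wd a (n + 1)) := by unfold wd; fun_prop
    exact ((Complex.continuous_ofReal.comp (continuous_vd a _)).mul (hFc.comp hv)).add
      ((Complex.continuous_ofReal.comp hwd).mul (hFc.comp hw))
  · unfold u; fun_prop

theorem L_congr (ha : StdHyp a) {F f : ℝ → ℂ} (hFf : EqOn F f (Ico 0 1)) {x : ℝ}
    (hx : x ∈ Ico 0 1) : L a N F x = L a N f x := by
  unfold L
  congr 1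
  · refine tsum_congr fun n => ?_
    have hv := hFf (mapsTo_branch_Ico ha (N := N) (.inl (.inl n)) hx)
    have hw := hFf (mapsTo_branch_Ico ha (N := N) (.inl (.inr n)) hx)
    simp only [branch] at hv hw
    rw [hv, hw]
  · refine congrArg _ (Finset.sum_congr rfl fun j hj => hFf ?_)
    exact mapsTo_branch_Ico ha (.inr ⟨j, Finset.mem_range.1 hj⟩) hx

theorem apply_branch_eq_of_forall_norm_le (ha : StdHyp a) (hN : N ≠ 0) {F : ℝ → ℂ} {lam : ℂ}
    (hlam : ‖lam‖ = 1) {x : ℝ} (hmax : ∀ y, ‖F y‖ ≤ ‖F x‖) (heig : L a N F x = lam * F x)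
    (i : (ℕ ⊕ ℕ) ⊕ Fin N) : F (branch a N i x) = lam * F x :=
  eq_of_hasSum_smul_of_norm_le (fun j => (weight_pos ha j x).le) (hasSum_weight ha hN x)
    (fun j => by rw [norm_mul, hlam, one_mul]; exact hmax _) (heig ▸ hasSum_L ha hN hmax x)
    (weight_pos ha i x)

theorem exists_u_one_eq_self (ha : StdHyp a) (hN : N ≠ 0) : ∃ x ∈ Icc (0 : ℝ) 1, u a N 1 x = x := by
  have hN1 : (1 : ℝ) ≤ N := by exact_mod_cast Nat.one_le_iff_ne_zero.2 hN
  have hl : lenJ a / N ≤ lenJ a := div_le_self ha.lenJ_pos.le hN1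
  have hd : 0 < 1 - lenJ a / N := by linarith [ha.lenJ_lt_one]
  refine ⟨binf a / (1 - lenJ a / N), ⟨div_nonneg ha.binf_pos.le hd.le, ?_⟩, ?_⟩
  · rw [div_le_one hd]; unfold lenJ at hl ⊢; linarith
  · rw [u, Nat.cast_one, sub_self, zero_mul, add_zero]
    generalize lenJ a / N = l at hd ⊢
    field_simp
    ring

theorem eq_const_and_eq_one_of_continuous_of_L_eq (ha : StdHyp a) (hN : N ≠ 0) {F : ℝ → ℂ}
    (hFc : Continuous F) {lam : ℂ} (hlam : ‖lam‖ = 1) {x₀ : ℝ} (hx₀ : x₀ ∈ Icc 0 1)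
    (hmax : ∀ y, ‖F y‖ ≤ ‖F x₀‖) (hF₀ : F x₀ ≠ 0)
    (heig : ∀ x ∈ Icc 0 1, L a N F x = lam * F x) :
    (∀ x ∈ Icc 0 1, F x = F x₀) ∧ lam = 1 := by
  have hbranch (x) (hx : x ∈ Icc 0 1) (hxM : ‖F x‖ = ‖F x₀‖) (i) :
      F (branch a N i x) = lam * F x :=
    apply_branch_eq_of_forall_norm_le ha hN hlam (hxM ▸ hmax) (heig x hx) i
  have hnorm : ∀ x ∈ Icc 0 1, ‖F x‖ = ‖F x₀‖ := by
    refine fun x hx => (Icc_subset_of_mapsTo_branch ha hN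
      (isClosed_Icc.inter (isClosed_eq hFc.norm continuous_const)) inter_subset_left
      ⟨x₀, hx₀, rfl⟩ (fun i y ⟨hy, hyM⟩ => ⟨mapsTo_branch_Icc ha i hy, ?_⟩) hx).2
    rw [mem_ofPred_eq, hbranch y hy hyM, norm_mul, hlam, one_mul, hyM]
  have hlam1 : lam = 1 := by
    obtain ⟨x, hx, hfix⟩ := exists_u_one_eq_self ha hN
    have h := hbranch x hx (hnorm x hx) (.inr ⟨0, Nat.pos_of_ne_zero hN⟩)
    simp only [branch, zero_add, hfix] at h
    exact (mul_eq_right₀ (norm_ne_zero_iff.1 (by rw [hnorm x hx]; exact norm_ne_zero_iff.2 hF₀))).1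
      h.symm
  refine ⟨fun x hx => (Icc_subset_of_mapsTo_branch ha hN
    (isClosed_Icc.inter (isClosed_eq hFc continuous_const)) inter_subset_left
    ⟨x₀, hx₀, rfl⟩ (fun i y ⟨hy, hyF⟩ => ⟨mapsTo_branch_Icc ha i hy, ?_⟩) hx).2, hlam1⟩
  rw [mem_ofPred_eq, hbranch y hy (hnorm y hy), hlam1, one_mul, hyF]

end Eigenfunctions

theorem BddLip.exists_continuous_extend {f : ℝ → ℂ} (hf : BddLip f) :
    ∃ F : ℝ → ℂ, Continuous F ∧ EqOn F f (Ico 0 1) ∧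
      ∃ x₀ ∈ Icc (0 : ℝ) 1, ∀ y, ‖F y‖ ≤ ‖F x₀‖ := by
  obtain ⟨K, -, hK⟩ := hf
  have hlip : LipschitzOnWith K.toNNReal f (Ico 0 1) :=
    LipschitzOnWith.of_dist_le_mul fun x hx y hy => by
      rw [dist_eq_norm, Real.dist_eq]
      exact (hK x hx y hy).trans (by gcongr; exact Real.le_coe_toNNReal K)
  obtain ⟨g, hg, hgf⟩ := hlip.extend_finite_dimension
  obtain ⟨x₀, hx₀, hmax⟩ := isCompact_Icc.exists_isMaxOn (nonempty_Icc.2 zero_le_one)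
    hg.continuous.norm.continuousOn
  refine ⟨IccExtend zero_le_one (g ∘ Subtype.val),
    (hg.continuous.comp continuous_subtype_val).Icc_extend', fun x hx => ?_, x₀, hx₀, fun y => ?_⟩
  · rw [IccExtend_of_mem _ _ (Ico_subset_Icc_self hx)]; exact (hgf hx).symm
  · rw [IccExtend_of_mem _ _ hx₀, IccExtend_apply]; exact hmax (projIcc 0 1 zero_le_one y).2

theorem eq_const_and_eq_one_of_L_eq (a : ℕ → ℝ) (ha : StdHyp a) (N : ℕ) (hN : N ≠ 0) (f : ℝ → ℂ)
    (hf : BddLip f) (lam : ℂ) (hlam : ‖lam‖ = 1) (hne : ∃ x ∈ Ico (0:ℝ) 1, f x ≠ 0)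
    (heig : ∀ x ∈ Ico (0:ℝ) 1, L a N f x = lam * f x) :
    (∃ c : ℂ, ∀ x ∈ Ico (0:ℝ) 1, f x = c) ∧ lam = 1 := by
  obtain ⟨F, hFc, hFf, x₀, hx₀, hmax⟩ := hf.exists_continuous_extend
  have heigF : EqOn (L a N F) (fun x => lam * F x) (Icc 0 1) := by
    refine EqOn.of_subset_closure (fun x hx => ?_) (continuous_L ha hFc hmax).continuousOn
      (continuous_const.mul hFc).continuousOn Ico_subset_Icc_self (closure_Ico zero_ne_one).ge
    rw [L_congr ha hFf hx, heig x hx, hFf hx]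
  have hF₀ : F x₀ ≠ 0 := by
    obtain ⟨x, hx, hfx⟩ := hne
    exact norm_ne_zero_iff.1 fun h => hfx (hFf hx ▸ norm_le_zero_iff.1 (h ▸ hmax x))
  obtain ⟨hconst, hlam1⟩ :=
    eq_const_and_eq_one_of_continuous_of_L_eq ha hN hFc hlam hx₀ hmax hF₀ heigF
  exact ⟨⟨F x₀, fun x hx => (hFf hx).symm.trans (hconst x (Ico_subset_Icc_self hx))⟩, hlam1⟩

/-- with `a_n = 1/(100 n³)` and `N = 4`, any bounded Lipschitz
eigenfunction of `L` for an eigenvalue of modulus `1` is constant, and the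
eigenvalue is `1`. -/
theorem stmt13 (f : ℝ → ℂ) (hf : BddLip f) (lam : ℂ) (hlam : ‖lam‖ = 1)
    (hne : ∃ x ∈ Ico (0:ℝ) 1, f x ≠ 0)
    (heig : ∀ x ∈ Ico (0:ℝ) 1, L aa 4 f x = lam * f x) :
    (∃ c : ℂ, ∀ x ∈ Ico (0:ℝ) 1, f x = c) ∧ lam = 1 :=
  eq_const_and_eq_one_of_L_eq aa stdHyp_aa 4 four_ne_zero f hf lam hlam hne heig

end Gouezel
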